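/- Let U be an update procedure of countable ordinal α ≥ 1 and define g : ℕ → ℕ by: g x = y if there exists i with U(U^(i)) = (0, x, y) and i is the least element of {n : ∃z, U(U^(n)) = (0, x, z)}, and g x = 0 if no such i exists. If U_g has a U_g-generated finite zero, then U has a U-generated finite zero (Reduction Lemma, successor case, part 2). -/

import Mathlib

/-- Transfinite sequences of functions are modeled as functions on all ordinals;
an update procedure of ordinal `α` only depends on (and only updates) the
entries with index below `α`, and a "sequence of ordinal `β`" is read off from
its entries with index below `β`. -/
abbrev OSeq := Ordinal → ℕ → ℕ

/-- `U` is an update procedure of ordinal `α`. -/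
def IsUpdateProc (α : Ordinal) (U : OSeq → Option (Ordinal × ℕ × ℕ)) : Prop :=
  (∀ f : OSeq, ∃ A : Finset (Ordinal × ℕ), (∀ p ∈ A, p.1 < α) ∧
      ∀ g : OSeq, (∀ p ∈ A, g p.1 p.2 = f p.1 p.2) → U g = U f) ∧
  (∀ (f : OSeq) (β : Ordinal) (n m : ℕ), U f = some (β, n, m) → β < α) ∧
  (∀ (f g : OSeq) (β : Ordinal) (n m i j : ℕ),
      (∀ γ, γ < β → f γ = g γ) →
      U f = some (β, n, m) → g β n = m → U g = some (β, i, j) → i ≠ n)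

/-- A sequence is finite (below `α`) if it has nonzero values in only
finitely many places. -/
def OFinite (α : Ordinal) (f : OSeq) : Prop :=
  Set.Finite {p : Ordinal × ℕ | p.1 < α ∧ f p.1 p.2 ≠ 0}

/-- Controlled update `f ⊕ u`: update the `γ`-th function at `n` to value `m`
and erase (reset to `0`) everything of higher index. -/
noncomputable def oplus (f : OSeq) : Option (Ordinal × ℕ × ℕ) → OSeq
  | none => f
  | some (γ, n, m) => fun β x =>
      if β < γ then f β x
      else if β = γ then (if x = n then m else f β x)
      else 0

/-- The learning process generated by `U`:
`U^(0)` is the constantly `0` sequence and `U^(i+1) = U^(i) ⊕ U(U^(i))`. -/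
noncomputable def learnProc (U : OSeq → Option (Ordinal × ℕ × ℕ)) : ℕ → OSeq
  | 0 => fun _ _ => 0
  | i + 1 => oplus (learnProc U i) (U (learnProc U i))

/-- `f` is `U`-generated. -/
def IsGenerated (U : OSeq → Option (Ordinal × ℕ × ℕ)) (f : OSeq) : Prop :=
  ∃ i : ℕ, f = learnProc U i

/-- Concatenation `g * f` of a sequence `g` of ordinal `β` with a sequence `f`:
entries below `β` come from `g`, higher entries from `f` (shifted by `β`). -/
noncomputable def concatSeq (β : Ordinal) (g f : OSeq) : OSeq :=
  fun δ => if δ < β then g δ else f (δ - β)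

/-- The shifted procedure `U_g` (for `g` a sequence of ordinal `β`):
`U_g f = (γ,n,m)` if `U (g * f) = (β + γ, n, m)`, and `U_g f = ∅` otherwise. -/
noncomputable def shiftU (U : OSeq → Option (Ordinal × ℕ × ℕ)) (β : Ordinal)
    (g : OSeq) : OSeq → Option (Ordinal × ℕ × ℕ) :=
  fun f =>
    match U (concatSeq β g f) with
    | none => none
    | some (δ, n, m) => if β ≤ δ then some (δ - β, n, m) else none

/-- The constantly zero sequence. -/
def zeroSeq : OSeq := fun _ _ => 0

/-! Every level-0 position is updated at most once during the learning process of `U`: after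
the first update the position holds the written value until the next update there, and that
next update would violate the update condition. So `g` is the final level-0 state of the
process, and `U` cannot give a sequence whose level 0 equals `g` a level-0 update that also
occurs in the process.

Suppose no `U^(i)` is a zero of `U` and `U_g^(k)` is a zero of `U_g`. Continuity of `U` at
`g * U_g^(j)` for `j ≤ k` reads only finitely many level-0 positions; right after the last
level-0 update touching them, `U^(s)` carries `g` there and `0` above level 0. From then on
`U^(s+j)` and `g * U_g^(j)` agree on everything `U` reads, so `U` gives them the same update,
which is not at level 0 and hence is `U_g`'s update shifted by one level. At `j = k` this
contradicts `U_g (U_g^(k)) = ∅`. -/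

open Finset

theorem oplus_some_self (f : OSeq) (γ : Ordinal) (n m : ℕ) :
    oplus f (some (γ, n, m)) γ n = m := by
  simp [oplus]

theorem oplus_some_of_lt (f : OSeq) {γ δ : Ordinal} (n m x : ℕ) (h : γ < δ) :
    oplus f (some (γ, n, m)) δ x = 0 := by
  simp [oplus, h.not_gt, h.ne']

theorem oplus_zero_of_ne (f : OSeq) {u : Option (Ordinal × ℕ × ℕ)} {n : ℕ}
    (h : ∀ m, u ≠ some (0, n, m)) : oplus f u 0 n = f 0 n := by
  rcases u with _ | ⟨γ, n', m⟩
  · rfl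
  · rcases eq_or_ne γ 0 with rfl | hγ
    · have hn : n ≠ n' := by rintro rfl; exact h m rfl
      simp [oplus, hn]
    · simp [oplus, pos_iff_ne_zero.2 hγ]

theorem oplus_some_ne_zero {f : OSeq} {γ δ : Ordinal} {n m x : ℕ}
    (h : oplus f (some (γ, n, m)) δ x ≠ 0) : (δ, x) = (γ, n) ∨ f δ x ≠ 0 := by
  simp only [oplus] at h
  split_ifs at h <;> simp_all

theorem OFinite.oplus {α : Ordinal} {f : OSeq} (hf : OFinite α f)
    (u : Option (Ordinal × ℕ × ℕ)) : OFinite α (oplus f u) := by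
  rcases u with _ | ⟨γ, n, m⟩
  · exact hf
  · refine (hf.union (Set.finite_singleton (γ, n))).subset ?_
    rintro ⟨δ, x⟩ ⟨hδ, hx⟩
    rcases oplus_some_ne_zero hx with h | h
    · exact Or.inr h
    · exact Or.inl ⟨hδ, h⟩

theorem oplus_add {β : Ordinal} {f F : OSeq} (hf : ∀ δ, f (β + δ) = F δ) (γ : Ordinal)
    (n m : ℕ) (δ : Ordinal) :
    oplus f (some (β + γ, n, m)) (β + δ) = oplus F (some (γ, n, m)) δ := by
  funext x
  simp [oplus, hf]

theorem concatSeq_of_lt {β δ : Ordinal} (G F : OSeq) (h : δ < β) :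
    concatSeq β G F δ = G δ :=
  if_pos h

theorem concatSeq_add (β : Ordinal) (G F : OSeq) (δ : Ordinal) :
    concatSeq β G F (β + δ) = F δ := by
  simp [concatSeq]

section LearningProcess

variable {α : Ordinal} {U : OSeq → Option (Ordinal × ℕ × ℕ)}

theorem shiftU_eq_some {β γ : Ordinal} {G F : OSeq} {n m : ℕ}
    (h : U (concatSeq β G F) = some (β + γ, n, m)) : shiftU U β G F = some (γ, n, m) := by
  simp [shiftU, h]

theorem learnProc_succ (i : ℕ) :
    learnProc U (i + 1) = oplus (learnProc U i) (U (learnProc U i)) :=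
  rfl

theorem oFinite_learnProc (α : Ordinal) (i : ℕ) : OFinite α (learnProc U i) := by
  induction i with
  | zero => simp [OFinite, learnProc]
  | succ i ih => exact ih.oplus _

def UpdatesZeroAt (U : OSeq → Option (Ordinal × ℕ × ℕ)) (i n : ℕ) : Prop :=
  ∃ m, U (learnProc U i) = some (0, n, m)

theorem learnProc_zero_eq_of_not_updatesZeroAt {i j n : ℕ} (hij : i ≤ j)
    (h : ∀ l, i ≤ l → l < j → ¬ UpdatesZeroAt U l n) :
    learnProc U j 0 n = learnProc U i 0 n := by
  induction j, hij using Nat.le_induction with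
  | base => rfl
  | succ j hij ih =>
    rw [learnProc_succ, oplus_zero_of_ne _ fun m hm => h j hij j.lt_succ_self ⟨m, hm⟩,
      ih fun l hl hlj => h l hl (hlj.trans j.lt_succ_self)]

theorem updatesZeroAt_subsingleton (hU : IsUpdateProc α U) (n : ℕ) :
    {i | UpdatesZeroAt U i n}.Subsingleton := by
  classical
  suffices ∀ i i', i < i' → UpdatesZeroAt U i n → ¬ UpdatesZeroAt U i' n by
    intro i hi i' hi'
    rcases lt_trichotomy i i' with h | h | h
    exacts [(this i i' h hi hi').elim, h, (this i' i h hi' hi).elim]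
  intro i i' hii' ⟨m, hm⟩ hi'
  have hex : ∃ l, i < l ∧ UpdatesZeroAt U l n := ⟨i', hii', hi'⟩
  obtain ⟨hil, m', hl⟩ := Nat.find_spec hex
  have hval : learnProc U (Nat.find hex) 0 n = m := by
    rw [learnProc_zero_eq_of_not_updatesZeroAt hil
      fun l hl hlt hupd => Nat.find_min hex hlt ⟨hl, hupd⟩, learnProc_succ, hm, oplus_some_self]
  exact hU.2.2 _ _ 0 n m n m' (fun _ hγ => absurd hγ not_lt_zero) hm hval hl rfl

/-- `g` records the values written at level 0 by the learning process of `U`. -/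
def IsLevelZeroLimit (U : OSeq → Option (Ordinal × ℕ × ℕ)) (g : ℕ → ℕ) : Prop :=
  ∀ x, (∃ i, U (learnProc U i) = some (0, x, g x)) ∨
    (g x = 0 ∧ ∀ i, ¬ UpdatesZeroAt U i x)

variable {g : ℕ → ℕ}

theorem learnProc_zero_eq_of_isLevelZeroLimit (hU : IsUpdateProc α U)
    (hg : IsLevelZeroLimit U g) {j n : ℕ} (h : ∀ l, j ≤ l → ¬ UpdatesZeroAt U l n) :
    learnProc U j 0 n = g n := by
  rcases hg n with ⟨i, hi⟩ | ⟨hg0, hnone⟩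
  · have hij : i < j := not_le.1 fun hji => h i hji ⟨_, hi⟩
    rw [learnProc_zero_eq_of_not_updatesZeroAt hij fun l hl _ hupd => ?_, learnProc_succ, hi,
      oplus_some_self]
    have := updatesZeroAt_subsingleton hU n ⟨_, hi⟩ hupd
    omega
  · rw [learnProc_zero_eq_of_not_updatesZeroAt (Nat.zero_le j) fun l _ _ => hnone l, hg0]
    rfl

theorem exists_eq_some_one_add (hU : IsUpdateProc α U) (hg : IsLevelZeroLimit U g)
    {i : ℕ} (hrun : U (learnProc U i) ≠ none) {f : OSeq} (hi : U (learnProc U i) = U f)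
    (hf : f 0 = g) : ∃ γ n m, U f = some (1 + γ, n, m) := by
  rcases hUf : U f with _ | ⟨δ, n, m⟩
  · exact absurd (hi.trans hUf) hrun
  rcases eq_or_ne δ 0 with rfl | hδ
  · rcases hg n with ⟨i₀, hi₀⟩ | ⟨_, hnone⟩
    · exact (hU.2.2 _ f 0 n (g n) n m (fun _ hγ => absurd hγ not_lt_zero) hi₀
        (congrFun hf n) hUf rfl).elim
    · exact (hnone i ⟨m, hi.trans hUf⟩).elim
  · exact ⟨δ - 1, n, m, by rw [Ordinal.add_sub_cancel_of_le (Order.one_le_iff_ne_zero.2 hδ)]⟩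

theorem exists_learnProc_stable (hU : IsUpdateProc α U) (hg : IsLevelZeroLimit U g)
    (N : Finset ℕ) : ∃ s, (∀ δ, learnProc U s (1 + δ) = 0) ∧
      ∀ j, s ≤ j → ∀ n ∈ N, learnProc U j 0 n = g n := by
  set T := {i | ∃ n ∈ N, UpdatesZeroAt U i n}
  have hT : T.Finite :=
    (N.finite_toSet.biUnion fun n _ => (updatesZeroAt_subsingleton hU n).finite).subset
      fun i ⟨n, hn, hi⟩ => Set.mem_biUnion hn hi
  have stable :
      ∀ s, (∀ i ∈ T, i < s) → ∀ j, s ≤ j → ∀ n ∈ N, learnProc U j 0 n = g n :=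
    fun s hs j hj n hn => learnProc_zero_eq_of_isLevelZeroLimit hU hg
      fun l hl hupd => (hs l ⟨n, hn, hupd⟩).not_ge (hj.trans hl)
  rcases T.eq_empty_or_nonempty with hT0 | hTne
  · exact ⟨0, fun _ => rfl, stable 0 fun i hi => by simp [hT0] at hi⟩
  · obtain ⟨i, ⟨n, -, m, hi⟩, hmax⟩ := Set.exists_max_image T id hT hTne
    refine ⟨i + 1, fun δ => ?_, stable (i + 1) fun l hl => Nat.lt_succ_of_le (hmax l hl)⟩
    funext x
    rw [learnProc_succ, hi, oplus_some_of_lt _ _ _ _ (zero_lt_one.trans_le le_self_add)]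
    rfl

theorem exists_learnProc_shadows (hU : IsUpdateProc α U) (hg : IsLevelZeroLimit U g)
    (hrun : ∀ i, U (learnProc U i) ≠ none) (k : ℕ) : ∃ s, U (learnProc U (s + k)) =
      U (concatSeq 1 (fun _ => g) (learnProc (shiftU U 1 (fun _ => g)) k)) := by
  set V := shiftU U 1 (fun _ => g)
  have hS0 : ∀ j, concatSeq 1 (fun _ => g) (learnProc V j) 0 = g := fun j =>
    concatSeq_of_lt _ _ zero_lt_one
  choose A _ hA using fun j => hU.1 (concatSeq 1 (fun _ => g) (learnProc V j))
  obtain ⟨s, hs_high, hs_zero⟩ :=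
    exists_learnProc_stable hU hg ((range (k + 1)).biUnion fun j => (A j).image Prod.snd)
  have agree : ∀ j ≤ k, (∀ δ, learnProc U (s + j) (1 + δ) = learnProc V j δ) →
      U (learnProc U (s + j)) = U (concatSeq 1 (fun _ => g) (learnProc V j)) := by
    intro j hj hhigh
    refine hA j _ fun ⟨δ, x⟩ hp => ?_
    rcases eq_or_ne δ 0 with rfl | hδ
    · rw [hS0, hs_zero _ (Nat.le_add_right s j) x
        (mem_biUnion.2 ⟨j, mem_range.2 (by omega), mem_image_of_mem _ hp⟩)]
    · obtain ⟨δ, rfl⟩ : ∃ δ', δ = 1 + δ' :=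
        ⟨δ - 1, (Ordinal.add_sub_cancel_of_le (Order.one_le_iff_ne_zero.2 hδ)).symm⟩
      simp only [hhigh, concatSeq_add]
  have shadow : ∀ j ≤ k, ∀ δ, learnProc U (s + j) (1 + δ) = learnProc V j δ := by
    intro j
    induction j with
    | zero => exact fun _ => hs_high
    | succ j ih =>
      intro hj δ
      have hUj := agree j (by omega) (ih (by omega))
      obtain ⟨γ, n, m, hγ⟩ := exists_eq_some_one_add hU hg (hrun _) hUj (hS0 j)
      have hV : V (learnProc V j) = some (γ, n, m) := shiftU_eq_some hγ
      rw [← add_assoc, learnProc_succ, learnProc_succ, hUj, hγ, hV, oplus_add (ih (by omega))]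
  exact ⟨s, agree k le_rfl (shadow k le_rfl)⟩

end LearningProcess

theorem reduction_lemma_successor_part2_general (α : Ordinal)
    (U : OSeq → Option (Ordinal × ℕ × ℕ)) (hU : IsUpdateProc α U)
    (g : ℕ → ℕ)
    (hg : ∀ x : ℕ,
      (∃ i : ℕ, U (learnProc U i) = some (0, x, g x) ∧
        ∀ j < i, ∀ z : ℕ, U (learnProc U j) ≠ some (0, x, z))
      ∨ (g x = 0 ∧ ∀ i : ℕ, ∀ z : ℕ, U (learnProc U i) ≠ some (0, x, z)))
    (hz : ∃ f : OSeq, IsGenerated (shiftU U 1 (fun _ => g)) f ∧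
      OFinite (α - 1) f ∧ shiftU U 1 (fun _ => g) f = none) :
    ∃ f : OSeq, IsGenerated U f ∧ OFinite α f ∧ U f = none := by
  have hg : IsLevelZeroLimit U g := fun x =>
    (hg x).imp (fun ⟨i, hi, _⟩ => ⟨i, hi⟩)
      fun ⟨h0, h⟩ => ⟨h0, fun i ⟨z, hz⟩ => h i z hz⟩
  by_contra hno
  have hrun : ∀ i, U (learnProc U i) ≠ none := fun i hi =>
    hno ⟨_, ⟨i, rfl⟩, oFinite_learnProc α i, hi⟩
  obtain ⟨_, ⟨k, rfl⟩, -, hk⟩ := hz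
  obtain ⟨s, hs⟩ := exists_learnProc_shadows hU hg hrun k
  obtain ⟨γ, n, m, hγ⟩ :=
    exists_eq_some_one_add hU hg (hrun _) hs (concatSeq_of_lt _ _ zero_lt_one)
  exact Option.some_ne_none _ ((shiftU_eq_some hγ).symm.trans hk)

/-- Reduction Lemma (successor case, part 2): let `U` be an update procedure of
countable ordinal `α ≥ 1` and let `g : ℕ → ℕ` be defined by `g x = y` if
`U (U^(i)) = (0, x, y)` for the least `i` such that `U (U^(i))` is an update at
`(0, x)`, and `g x = 0` if there is no such `i`. If `U_g` has a `U_g`-generated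
finite zero, then `U` has a `U`-generated finite zero. -/
theorem reduction_lemma_successor_part2 (α : Ordinal) (hα : 1 ≤ α)
    (hcount : α.card ≤ Cardinal.aleph0)
    (U : OSeq → Option (Ordinal × ℕ × ℕ)) (hU : IsUpdateProc α U)
    (g : ℕ → ℕ)
    (hg : ∀ x : ℕ,
      (∃ i : ℕ, U (learnProc U i) = some (0, x, g x) ∧
        ∀ j < i, ∀ z : ℕ, U (learnProc U j) ≠ some (0, x, z))
      ∨ (g x = 0 ∧ ∀ i : ℕ, ∀ z : ℕ, U (learnProc U i) ≠ some (0, x, z)))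
    (hz : ∃ f : OSeq, IsGenerated (shiftU U 1 (fun _ => g)) f ∧
      OFinite (α - 1) f ∧ shiftU U 1 (fun _ => g) f = none) :
    ∃ f : OSeq, IsGenerated U f ∧ OFinite α f ∧ U f = none :=
  reduction_lemma_successor_part2_general α U hU g hg hz
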